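/- arXiv:1012.0742 — 8 statements merged into one kernel-verified Lean document; each statement's English description precedes it below -/
import Mathlib

section
/- Let L be a finite lattice, x₀ ∈ L, and B ⊆ L a border for x₀. For every x₁ ∈ L with x₀ < x₁, the following are equivalent: (1) x₀ ⋖ x₁; (2) there exists y ∈ B such that x₁ = x₀ ⊔ y and, for all z ∈ B, if x₀ ⊔ z ≤ x₀ ⊔ y then x₀ ⊔ z = x₀ ⊔ y. -/
/-- `B` is a border for `x`: no element of `B` is below `x`, and every upper
cover of `x` is above some element of `B`. -/
def IsBorder {L : Type*} [Lattice L] (B : Set L) (x : L) : Prop :=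
  (∀ y ∈ B, ¬ y ≤ x) ∧ (∀ z, x ⋖ z → ∃ y ∈ B, y ≤ z)

/-- Characterization of the upper cover of `x₀` via a border. -/
theorem stmt_4 {L : Type*} [Lattice L] [Fintype L] {B : Set L} {x₀ : L}
    (hB : IsBorder B x₀) (x₁ : L) (h : x₀ < x₁) :
    x₀ ⋖ x₁ ↔
      ∃ y ∈ B, x₁ = x₀ ⊔ y ∧
        ∀ z ∈ B, x₀ ⊔ z ≤ x₀ ⊔ y → x₀ ⊔ z = x₀ ⊔ y := by
  obtain ⟨hB1, hB2⟩ := hB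
  constructor
  · intro hc
    obtain ⟨y, hyB, hyle⟩ := hB2 x₁ hc
    have hxy : x₀ ⊔ y = x₁ := by
      have h1 : x₀ < x₀ ⊔ y :=
        lt_of_le_of_ne le_sup_left (fun e => hB1 y hyB (le_sup_right.trans e.symm.le))
      by_contra hn
      exact hc.2 h1 (lt_of_le_of_ne (sup_le hc.le hyle) hn)
    refine ⟨y, hyB, hxy.symm, ?_⟩
    intro z hzB hzle
    have h1 : x₀ < x₀ ⊔ z :=
      lt_of_le_of_ne le_sup_left (fun e => hB1 z hzB (le_sup_right.trans e.symm.le))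
    rw [hxy] at hzle ⊢
    by_contra hn
    exact hc.2 h1 (lt_of_le_of_ne hzle hn)
  · rintro ⟨y, hyB, rfl, hmin⟩
    refine ⟨h, fun w hw hlt => ?_⟩
    obtain ⟨c, hc, hcw⟩ := exists_covBy_le_of_lt hw
    obtain ⟨z, hzB, hzc⟩ := hB2 c hc
    have hzw : z ≤ w := hzc.trans hcw
    have : x₀ ⊔ z = x₀ ⊔ y := hmin z hzB (sup_le le_sup_left (hzw.trans hlt.le))
    exact absurd (this ▸ sup_le hw.le hzw : x₀ ⊔ y ≤ w) (not_le_of_gt hlt)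
end

section
/- Let L be a finite lattice, x ∈ L, and B ⊆ L a proper border for x (i.e., a border that is an antichain). Then the standard step for B and x, namely (B ∪ {x}) \ uc(x), is an antichain, where uc(x) = {y ∈ L : x ⋖ y} is the upper cover of x. -/
/-- If `B` is a proper border (a border which is an antichain)
for `x`, then the standard step `(B ∪ {x}) \ uc(x)` is an antichain. -/
theorem stmt_5 {L : Type*} [Lattice L] [Fintype L] {B : Set L} {x : L}
    (hB : IsBorder B x) (hA : IsAntichain (· ≤ ·) B) :
    IsAntichain (· ≤ ·) ((B ∪ {x}) \ {y | x ⋖ y}) := by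
  have hSA : IsStronglyAtomic L :=
    IsStronglyAtomic.of_wellFounded_lt (wellFounded_lt (α := L))
  rintro a ⟨ha, hanc⟩ b ⟨hb, hbnc⟩ hab hle
  rcases ha with ha | ha <;> rcases hb with hb | hb
  · exact hA ha hb hab hle
  · rw [Set.mem_singleton_iff] at hb; subst hb
    exact hB.1 a ha hle
  · rw [Set.mem_singleton_iff] at ha; subst ha
    have hlt : a < b := lt_of_le_of_ne hle (fun h => hab h)
    obtain ⟨z, hz, hzb⟩ := exists_covBy_le_of_lt hlt
    obtain ⟨y, hy, hyz⟩ := hB.2 z hz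
    have hyb : y ≤ b := hyz.trans hzb
    rcases eq_or_ne y b with rfl | hne
    · exact hbnc (le_antisymm hzb hyz ▸ hz)
    · exact hA hy hb hne hyb
  · rw [Set.mem_singleton_iff] at ha hb; exact hab (ha.trans hb.symm)
end

section
/- Let L be a finite lattice of size n and let x₁, …, xₙ be a reverse topological sort of L. Define B₁ = ∅ and inductively B_{k+1} = (B_k ∪ {x_k}) \ uc(x_k). Then for every k with 1 ≤ k ≤ n: B_k ⊆ {x₁, …, x_{k−1}}, and for every j < k there exists y ∈ B_k with y ≤ x_j. -/
/-- Along a reverse topological sort `x 0, …, x (n-1)` of a finite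
lattice `L`, the inductively defined borders (`B 0 = ∅`,
`B (k+1) = (B k ∪ {x k}) \ uc (x k)`) satisfy: `B k` only contains elements
appearing strictly before position `k`, and every element appearing strictly
before position `k` is above some element of `B k`. -/
theorem stmt_7 {L : Type*} [Lattice L] [Fintype L]
    (x : Fin (Fintype.card L) → L) (hbij : Function.Bijective x)
    (hsort : ∀ i j, x i ≤ x j → j ≤ i)
    (B : ℕ → Set L) (hB0 : B 0 = ∅)
    (hBs : ∀ k : Fin (Fintype.card L),
      B (k + 1) = (B k ∪ {x k}) \ {y | x k ⋖ y}) :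
    ∀ k : Fin (Fintype.card L),
      (B k ⊆ {w | ∃ j, j < k ∧ x j = w}) ∧
      (∀ j : Fin (Fintype.card L), j < k → ∃ y ∈ B k, y ≤ x j) := by
  have key : ∀ m : ℕ, ∀ hm : m < Fintype.card L,
      (B m ⊆ {w | ∃ j : Fin (Fintype.card L), j < (⟨m, hm⟩ : Fin _) ∧ x j = w}) ∧
      (∀ j : Fin (Fintype.card L), j < (⟨m, hm⟩ : Fin _) → ∃ y ∈ B m, y ≤ x j) := by
    intro m
    induction m with
    | zero =>
      intro hm
      constructor
      · rw [hB0]; exact fun w hw => hw.elim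
      · intro j hj
        exact absurd hj (by simp [Fin.lt_def])
    | succ m ih =>
      intro hm
      have hm' : m < Fintype.card L := Nat.lt_of_succ_lt hm
      obtain ⟨ih1, ih2⟩ := ih hm'
      have hstep : B (m + 1) = (B m ∪ {x ⟨m, hm'⟩}) \ {y | x ⟨m, hm'⟩ ⋖ y} :=
        hBs ⟨m, hm'⟩
      constructor
      · intro w hw
        rw [hstep] at hw
        obtain ⟨hw1, _⟩ := hw
        rcases hw1 with h | h
        · obtain ⟨j, hj, hje⟩ := ih1 h
          exact ⟨j, lt_trans hj (by simp [Fin.lt_def]), hje⟩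
        · exact ⟨⟨m, hm'⟩, by simp [Fin.lt_def], h.symm⟩
      · intro j hj
        have hxk : x ⟨m, hm'⟩ ∈ B (m + 1) := by
          rw [hstep]
          exact ⟨Or.inr rfl, fun h => (lt_irrefl _ h.lt).elim⟩
        have hj' : (j : ℕ) < m + 1 := hj
        rcases Nat.lt_succ_iff_lt_or_eq.mp hj' with h | h
        · obtain ⟨y, hy, hyle⟩ := ih2 j h
          by_cases hcov : x ⟨m, hm'⟩ ⋖ y
          · exact ⟨x ⟨m, hm'⟩, hxk, le_trans hcov.le hyle⟩
          · refine ⟨y, ?_, hyle⟩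
            rw [hstep]
            exact ⟨Or.inl hy, hcov⟩
        · have : j = ⟨m, hm'⟩ := Fin.ext h
          exact ⟨x ⟨m, hm'⟩, hxk, by rw [this]⟩
  intro k
  have := key k.val k.isLt
  simpa using this
end

section
/- Let L be a finite lattice of size n and let x₁, …, xₙ be a reverse topological sort of L. Define B₁ = ∅ and inductively B_{k+1} = (B_k ∪ {x_k}) \ uc(x_k). Then for every k with 1 ≤ k ≤ n, B_k is a border for x_k. -/
/-- Along a reverse topological sort `x 0, …, x (n-1)` of a finite
lattice `L`, the inductively defined sets (`B 0 = ∅`,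
`B (k+1) = (B k ∪ {x k}) \ uc (x k)`) are borders: `B k` is a border for `x k`. -/
theorem stmt_8 {L : Type*} [Lattice L] [Fintype L]
    (x : Fin (Fintype.card L) → L) (hbij : Function.Bijective x)
    (hsort : ∀ i j, x i ≤ x j → j ≤ i)
    (B : ℕ → Set L) (hB0 : B 0 = ∅)
    (hBs : ∀ k : Fin (Fintype.card L),
      B (k + 1) = (B k ∪ {x k}) \ {y | x k ⋖ y}) :
    ∀ k : Fin (Fintype.card L), IsBorder (B k) (x k) := by
  have hnn : Fintype.card L = Fintype.card L := rfl
  have hchar : ∀ k : ℕ, k ≤ Fintype.card L → B k =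
      {y | ∃ i : Fin (Fintype.card L), (i : ℕ) < k ∧ y = x i ∧
        ∀ j : Fin (Fintype.card L), (j : ℕ) < k → ¬ x j ⋖ y} := by
    intro k
    induction k with
    | zero => intro _; rw [hB0]; ext y; simp
    | succ k ih =>
      intro hk1
      have hk : k < Fintype.card L := hk1
      have ihk := ih (le_of_lt hk)
      have hstep := hBs ⟨k, hk⟩
      simp only at hstep
      rw [hstep, ihk]
      ext y
      simp only [Set.mem_diff, Set.mem_union, Set.mem_setOf_eq,
        Set.mem_singleton_iff]
      constructor
      · rintro ⟨h1 | rfl, h2⟩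
        · obtain ⟨i, hik, rfl, hall⟩ := h1
          refine ⟨i, Nat.lt_succ_of_lt hik, rfl, fun j hj => ?_⟩
          rcases Nat.lt_succ_iff_lt_or_eq.mp hj with hj' | hj'
          · exact hall j hj'
          · have hje : j = ⟨k, hk⟩ := Fin.ext hj'
            rw [hje]; exact h2
        · refine ⟨⟨k, hk⟩, Nat.lt_succ_self k, rfl, fun j hj => ?_⟩
          rcases Nat.lt_succ_iff_lt_or_eq.mp hj with hj' | hj'
          · intro hc
            have hle := hsort _ _ hc.le
            have : (k : ℕ) ≤ (j : ℕ) := hle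
            omega
          · have hje : j = ⟨k, hk⟩ := Fin.ext hj'
            rw [hje]; exact h2
      · rintro ⟨i, hik, rfl, hall⟩
        have hnotcov : ¬ x ⟨k, hk⟩ ⋖ x i := hall ⟨k, hk⟩ (Nat.lt_succ_self k)
        refine ⟨?_, hnotcov⟩
        rcases Nat.lt_succ_iff_lt_or_eq.mp hik with hi' | hi'
        · left; exact ⟨i, hi', rfl, fun j hj => hall j (Nat.lt_succ_of_lt hj)⟩
        · right
          have : i = ⟨k, hk⟩ := Fin.ext hi'
          rw [this]
  intro k
  have hchark := hchar k (le_of_lt k.isLt)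
  constructor
  · intro y hy
    rw [hchark] at hy
    obtain ⟨i, hik, rfl, _⟩ := hy
    intro hle
    have : (k : ℕ) ≤ (i : ℕ) := hsort i k hle
    omega
  · intro z hz
    -- main claim by induction on k - j
    have main : ∀ m : ℕ, ∀ j : Fin (Fintype.card L), (j : ℕ) < (k : ℕ) → (k : ℕ) - (j : ℕ) ≤ m →
        ∃ y ∈ B k, y ≤ x j := by
      intro m
      induction m with
      | zero => intro j hj hm; omega
      | succ m ih =>
        intro j hj hm
        by_cases hmem : x j ∈ B k
        · exact ⟨x j, hmem, le_refl _⟩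
        · rw [hchark] at hmem
          simp only [Set.mem_setOf_eq] at hmem
          push_neg at hmem
          obtain ⟨j', hj'k, hcov⟩ := hmem j hj rfl
          have hlt : x j' < x j := hcov.lt
          have hjj' : (j : ℕ) ≤ (j' : ℕ) := hsort j' j hlt.le
          have hne : (j : ℕ) ≠ (j' : ℕ) := by
            intro h
            exact absurd (congrArg x (Fin.ext h)) hlt.ne'
          obtain ⟨y, hy, hyle⟩ := ih j' hj'k (by omega)
          exact ⟨y, hy, le_trans hyle hlt.le⟩
    obtain ⟨j, rfl⟩ := hbij.surjective z
    have hlt : x k < x j := hz.lt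
    have hjk : (j : ℕ) ≤ (k : ℕ) := hsort k j hlt.le
    have hne : (j : ℕ) ≠ (k : ℕ) := by
      intro h
      exact absurd (congrArg x (Fin.ext h)) hlt.ne'
    obtain ⟨y, hy, hyle⟩ := main ((k : ℕ) - (j : ℕ)) j (by omega) (le_refl _)
    exact ⟨y, hy, hyle⟩
end

section
/- Let L be a finite lattice and let x, z ∈ L with x < z. Let Y ⊆ L be a set of immediate predecessors of z (every y ∈ Y satisfies y ⋖ z) such that x ∉ Y and every y with x ≤ y ⋖ z and y ≠ x belongs to Y. Then x ⋖ z if and only if z ≤ ⨅_{y ∈ Y} (x ⊔ y), where the infimum over the empty set is ⊤. -/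
/-- Let `x < z` in a finite lattice and let `Y` be a set of lower
covers of `z` not containing `x` but containing every lower cover of `z` that
is above `x` and different from `x`.  Then `x ⋖ z` iff
`z ≤ ⨅_{y ∈ Y} (x ⊔ y)` (the empty infimum being `⊤`). -/
theorem stmt_9 {L : Type*} [Lattice L] [Fintype L] [OrderTop L]
    {x z : L} (hxz : x < z) (Y : Finset L)
    (hYlc : ∀ y ∈ Y, y ⋖ z) (hxY : x ∉ Y)
    (hYall : ∀ y, x ≤ y → y ⋖ z → y ≠ x → y ∈ Y) :
    x ⋖ z ↔ z ≤ Y.inf (fun y => x ⊔ y) := by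
  constructor
  · intro hcov
    refine Finset.le_inf fun y hy => ?_
    have hyc := hYlc y hy
    have hle : x ⊔ y ≤ z := sup_le hcov.le hyc.le
    rcases hle.lt_or_eq with h | h
    · exfalso
      rcases (le_sup_left : x ≤ x ⊔ y).lt_or_eq with hx | hx
      · exact hcov.2 hx h
      · have hyx : y ≤ x := le_sup_right.trans hx.ge
        rcases hyx.lt_or_eq with h2 | h2
        · exact hyc.2 h2 hxz
        · exact hxY (h2 ▸ hy)
    · exact h.ge
  · intro hinf
    constructor
    · exact hxz
    · intro w hxw hwz
      obtain ⟨y, hwy, hyc⟩ := hwz.exists_le_covby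
      have hy : y ∈ Y := hYall y (hxw.le.trans hwy) hyc (fun h => (h ▸ (hxw.trans_le hwy)).false)
      exact absurd (hinf.trans (Finset.inf_le hy)) (by simp [hxw.le.trans hwy, hyc.lt.not_ge])
end

section
/- Let L be a finite distributive lattice and let x, z ∈ L with x < z. Let Y ⊆ L be a set of immediate predecessors of z (every y ∈ Y satisfies y ⋖ z) such that x ∉ Y and every y with x ≤ y ⋖ z and y ≠ x belongs to Y. Then x ⋖ z if and only if z ≤ x ⊔ (⨅ Y), where the infimum over the empty set is ⊤. -/
/-- Let `x < z` in a finite distributive lattice and let `Y` be a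
set of lower covers of `z` not containing `x` but containing every lower cover
of `z` that is above `x` and different from `x`.  Then `x ⋖ z` iff
`z ≤ x ⊔ (⨅ Y)` (the empty infimum being `⊤`). -/
theorem stmt_10 {L : Type*} [DistribLattice L] [Fintype L] [OrderTop L]
    {x z : L} (hxz : x < z) (Y : Finset L)
    (hYlc : ∀ y ∈ Y, y ⋖ z) (hxY : x ∉ Y)
    (hYall : ∀ y, x ≤ y → y ⋖ z → y ≠ x → y ∈ Y) :
    x ⋖ z ↔ z ≤ x ⊔ Y.inf id := by
  constructor
  · intro hcov
    rw [Finset.inf_sup_distrib_left]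
    refine Finset.le_inf fun y hy => ?_
    have hy' := hYlc y hy
    have hxy : ¬ x ≤ y := by
      intro hle
      rcases hle.lt_or_eq with h | h
      · exact hcov.2 h hy'.1
      · exact hxY (h ▸ hy)
    have hlt : y < x ⊔ y := lt_of_le_of_ne le_sup_right (fun h => hxy (h ▸ le_sup_left))
    have hle2 : x ⊔ y ≤ z := sup_le hxz.le hy'.1.le
    have : x ⊔ y = z := (lt_or_eq_of_le hle2).resolve_left (hy'.2 hlt)
    simp [this]
  · intro hle
    refine ⟨hxz, fun w hxw hwz => ?_⟩
    obtain ⟨y, hwy, hyz⟩ := exists_le_covBy_of_lt hwz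
    have hxy : x ≤ y := le_trans hxw.le hwy
    have hyY : y ∈ Y := hYall y hxy hyz (fun h => hxw.ne' (le_antisymm (h ▸ hwy) hxw.le))
    have h1 : Y.inf id ≤ y := Finset.inf_le hyY
    have : z ≤ y := le_trans hle (sup_le hxy (by simpa using h1))
    exact hyz.1.not_ge this
end

section
/- Let L be a finite lattice (not assumed distributive) and let x, z ∈ L with x < z. Let Y ⊆ L be a set of immediate predecessors of z (every y ∈ Y satisfies y ⋖ z) such that x ∉ Y and every y with x ≤ y ⋖ z and y ≠ x belongs to Y. If z ≤ x ⊔ (⨅ Y), where the infimum over the empty set is ⊤, then x ⋖ z. -/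
/-- Let `x < z` in a finite (not necessarily distributive)
lattice and let `Y` be a set of lower covers of `z` not containing `x` but
containing every lower cover of `z` that is above `x` and different from `x`.
If `z ≤ x ⊔ (⨅ Y)` (the empty infimum being `⊤`), then `x ⋖ z`. -/
theorem stmt_11 {L : Type*} [Lattice L] [Fintype L] [OrderTop L]
    {x z : L} (hxz : x < z) (Y : Finset L)
    (hYlc : ∀ y ∈ Y, y ⋖ z) (hxY : x ∉ Y)
    (hYall : ∀ y, x ≤ y → y ⋖ z → y ≠ x → y ∈ Y)
    (h : z ≤ x ⊔ Y.inf id) : x ⋖ z := by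
  refine ⟨hxz, fun w hxw hwz => ?_⟩
  obtain ⟨y, hwy, hyz⟩ := exists_le_covBy_of_lt hwz
  have hxy : x ≤ y := hxw.le.trans hwy
  have hyx : y ≠ x := fun e => absurd (e ▸ hwy) (not_le_of_gt hxw)
  have hyY : y ∈ Y := hYall y hxy hyz hyx
  have : Y.inf id ≤ y := Finset.inf_le hyY
  exact absurd (h.trans (sup_le hxy this)) (not_le_of_gt hyz.lt)
end

section
/- Let L be a finite lattice, L' a finite distributive lattice, and f : L → L' an injective map preserving binary joins (f(a ⊔ b) = f(a) ⊔ f(b) for all a, b ∈ L). Let x, z ∈ L with x < z, and let Y ⊆ L be a set of immediate predecessors of z (every y ∈ Y satisfies y ⋖ z) such that x ∉ Y and every y with x ≤ y ⋖ z and y ≠ x belongs to Y. Then x ⋖ z if and only if f(z) ≤ f(x) ⊔ (⨅_{y ∈ Y} f(y)), where the infimum in L' over the empty set is the top element of L'. -/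
/-- Let `f : L → L'` be an injective join-homomorphism from a
finite lattice into a finite distributive lattice.  Let `x < z` in `L` and let
`Y` be a set of lower covers of `z` not containing `x` but containing every
lower cover of `z` that is above `x` and different from `x`.  Then `x ⋖ z` iff
`f z ≤ f x ⊔ (⨅_{y ∈ Y} f y)` (the empty infimum in `L'` being `⊤`). -/
theorem stmt_12 {L L' : Type*} [Lattice L] [Fintype L]
    [DistribLattice L'] [Fintype L'] [OrderTop L']
    (f : L → L') (hinj : Function.Injective f)
    (hf : ∀ a b : L, f (a ⊔ b) = f a ⊔ f b)
    {x z : L} (hxz : x < z) (Y : Finset L)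
    (hYlc : ∀ y ∈ Y, y ⋖ z) (hxY : x ∉ Y)
    (hYall : ∀ y, x ≤ y → y ⋖ z → y ≠ x → y ∈ Y) :
    x ⋖ z ↔ f z ≤ f x ⊔ Y.inf (fun y => f y) := by
  have hmono : ∀ a b : L, a ≤ b → f a ≤ f b := by
    intro a b hab
    have : f (a ⊔ b) = f a ⊔ f b := hf a b
    rw [sup_eq_right.2 hab] at this
    exact le_sup_left.trans this.ge
  have hrefl : ∀ a b : L, f a ≤ f b → a ≤ b := by
    intro a b hab
    have : f (a ⊔ b) = f b := by rw [hf]; exact sup_eq_right.2 hab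
    have := hinj this
    exact le_of_sup_eq this
  constructor
  · intro hcov
    rw [Finset.inf_sup_distrib_left]
    refine Finset.le_inf fun y hy => ?_
    have hylt := hYlc y hy
    have hxley : ¬ x ≤ y := by
      intro hle
      rcases eq_or_lt_of_le hle with rfl | hlt
      · exact hxY hy
      · exact hcov.2 hlt hylt.lt
    have hsup : x ⊔ y = z := by
      have h1 : y < x ⊔ y := lt_of_le_of_ne le_sup_right
        (fun h => hxley (le_sup_left.trans h.ge))
      have h2 : x ⊔ y ≤ z := sup_le hcov.lt.le hylt.lt.le
      exact ((lt_or_eq_of_le h2).resolve_left (hylt.2 h1))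
    rw [← hf, hsup]
  · intro hle
    refine ⟨hxz, fun w hxw hwz => ?_⟩
    obtain ⟨y, hwy, hycov⟩ := exists_le_covBy_of_lt hwz
    have hxy : x < y := lt_of_lt_of_le hxw hwy
    have hyY : y ∈ Y := hYall y hxy.le hycov (ne_of_gt hxy)
    have : f z ≤ f y := by
      have h1 : f x ⊔ Y.inf (fun y => f y) ≤ f x ⊔ f y :=
        sup_le_sup_left (Finset.inf_le hyY) _
      have h2 : f x ⊔ f y = f y := by rw [← hf, sup_eq_right.2 hxy.le]
      exact hle.trans (h1.trans h2.le)
    exact absurd (hrefl _ _ this) (not_le_of_gt hycov.lt)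
end
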